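/- Let H be a symmetric matrix in ℝ^{n×n}, let h ∈ ℝⁿ, and let ε ∈ [0, 1]. Assume ‖h‖ ≤ ‖H‖. Let v ∈ B(0,1) be such that |vᵀHv| ≥ (1 − ε)·‖H‖, and assume hᵀv ≥ 0 if vᵀHv ≥ 0 and hᵀv ≤ 0 if vᵀHv < 0. Let w ∈ B((1−ε)·v, ε) and u ∈ B(0, ε). Then |f(w) − f(u)| ≥ (1 − 7ε)·‖H‖. -/

import Mathlib

open Matrix

/-- The Euclidean norm of a vector in `ℝⁿ`. -/
noncomputable def euclidNorm {n : ℕ} (x : Fin n → ℝ) : ℝ := Real.sqrt (∑ i, x i ^ 2)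

/-- The spectral norm (operator 2-norm) of a real `n × n` matrix. -/
noncomputable def specNorm {n : ℕ} (H : Matrix (Fin n) (Fin n) ℝ) : ℝ :=
  sSup {r : ℝ | ∃ x : Fin n → ℝ, euclidNorm x = 1 ∧ r = euclidNorm (H.mulVec x)}

/-- The Euclidean ball `B(c, r) = {x : ‖x − c‖ ≤ r}`. -/
noncomputable def eball {n : ℕ} (c : Fin n → ℝ) (r : ℝ) : Set (Fin n → ℝ) :=
  {x | euclidNorm (x - c) ≤ r}


lemma enorm_nonneg' {n : ℕ} (x : Fin n → ℝ) : 0 ≤ euclidNorm x := Real.sqrt_nonneg _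

lemma sq_enorm {n : ℕ} (x : Fin n → ℝ) : euclidNorm x ^ 2 = ∑ i, x i ^ 2 :=
  Real.sq_sqrt (Finset.sum_nonneg fun i _ => sq_nonneg _)

lemma enorm_smul' {n : ℕ} (a : ℝ) (x : Fin n → ℝ) : euclidNorm (a • x) = |a| * euclidNorm x := by
  unfold euclidNorm
  rw [← Real.sqrt_sq_eq_abs, ← Real.sqrt_mul (sq_nonneg a), Finset.mul_sum]
  congr 1; apply Finset.sum_congr rfl; intro i _; simp [Pi.smul_apply, mul_pow]

lemma dot_abs_le {n : ℕ} (x y : Fin n → ℝ) : |x ⬝ᵥ y| ≤ euclidNorm x * euclidNorm y := by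
  have h1 : (x ⬝ᵥ y) ^ 2 ≤ (∑ i, x i ^ 2) * ∑ i, y i ^ 2 :=
    Finset.sum_mul_sq_le_sq_mul_sq Finset.univ x y
  have : |x ⬝ᵥ y| = Real.sqrt ((x ⬝ᵥ y) ^ 2) := (Real.sqrt_sq_eq_abs _).symm
  rw [this]
  calc Real.sqrt ((x ⬝ᵥ y) ^ 2) ≤ Real.sqrt ((∑ i, x i ^ 2) * ∑ i, y i ^ 2) :=
        Real.sqrt_le_sqrt h1
    _ = euclidNorm x * euclidNorm y := by
        rw [Real.sqrt_mul (Finset.sum_nonneg fun i _ => sq_nonneg _)]; rfl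

lemma specSet_bdd {n : ℕ} (H : Matrix (Fin n) (Fin n) ℝ) :
    BddAbove {r : ℝ | ∃ x : Fin n → ℝ, euclidNorm x = 1 ∧ r = euclidNorm (H.mulVec x)} := by
  refine ⟨Real.sqrt (∑ i, ∑ j, H i j ^ 2), ?_⟩
  rintro r ⟨x, hx, rfl⟩
  unfold euclidNorm
  apply Real.sqrt_le_sqrt
  have hx2 : ∑ j, x j ^ 2 = 1 := by
    have := sq_enorm x; rw [hx] at this; linarith [this]
  calc ∑ i, (H.mulVec x) i ^ 2 ≤ ∑ i, (∑ j, H i j ^ 2) * ∑ j, x j ^ 2 := by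
        apply Finset.sum_le_sum; intro i _
        exact Finset.sum_mul_sq_le_sq_mul_sq Finset.univ (fun j => H i j) x
    _ = ∑ i, ∑ j, H i j ^ 2 := by rw [← Finset.sum_mul, hx2, mul_one]

lemma specNorm_nonneg {n : ℕ} (H : Matrix (Fin n) (Fin n) ℝ) : 0 ≤ specNorm H := by
  apply Real.sSup_nonneg
  rintro r ⟨x, hx, rfl⟩; exact enorm_nonneg' _

lemma mulVec_enorm_le {n : ℕ} (H : Matrix (Fin n) (Fin n) ℝ) (x : Fin n → ℝ) :
    euclidNorm (H.mulVec x) ≤ specNorm H * euclidNorm x := by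
  rcases eq_or_lt_of_le (enorm_nonneg' x) with h0 | h0
  · have hx0 : x = 0 := by
      have h1 : ∑ i, x i ^ 2 = 0 := by
        have := sq_enorm x; rw [← h0] at this; nlinarith [this]
      funext i
      have h2 := (Finset.sum_eq_zero_iff_of_nonneg (fun j _ => sq_nonneg (x j))).mp h1 i (Finset.mem_univ i)
      exact pow_eq_zero_iff two_ne_zero |>.mp h2
    subst hx0
    simp [Matrix.mulVec_zero]
    unfold euclidNorm; simp
  · set c := euclidNorm x with hc
    have hy : euclidNorm (c⁻¹ • x) = 1 := by
      rw [enorm_smul', abs_of_pos (inv_pos.mpr h0), ← hc, inv_mul_cancel₀ (ne_of_gt h0)]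
    have hmem : euclidNorm (H.mulVec (c⁻¹ • x)) ∈
        {r : ℝ | ∃ y : Fin n → ℝ, euclidNorm y = 1 ∧ r = euclidNorm (H.mulVec y)} := ⟨_, hy, rfl⟩
    have hle := le_csSup (specSet_bdd H) hmem
    rw [Matrix.mulVec_smul, enorm_smul', abs_of_pos (inv_pos.mpr h0)] at hle
    have : euclidNorm (H.mulVec x) = c * (c⁻¹ * euclidNorm (H.mulVec x)) := by
      field_simp
    rw [this]
    calc c * (c⁻¹ * euclidNorm (H.mulVec x)) ≤ c * specNorm H :=
          mul_le_mul_of_nonneg_left hle (le_of_lt h0)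
      _ = specNorm H * c := mul_comm _ _

lemma dot_mulVec_abs_le {n : ℕ} (H : Matrix (Fin n) (Fin n) ℝ) (x y : Fin n → ℝ) :
    |x ⬝ᵥ H.mulVec y| ≤ euclidNorm x * (specNorm H * euclidNorm y) :=
  le_trans (dot_abs_le x _) (mul_le_mul_of_nonneg_left (mulVec_enorm_le H y) (enorm_nonneg' x))

lemma dot_mulVec_symm {n : ℕ} {H : Matrix (Fin n) (Fin n) ℝ} (hH : H.IsSymm)
    (x y : Fin n → ℝ) : x ⬝ᵥ H.mulVec y = y ⬝ᵥ H.mulVec x := by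
  rw [Matrix.dotProduct_mulVec, ← Matrix.mulVec_transpose, hH.eq, dotProduct_comm]

set_option maxHeartbeats 1000000 in
/-- Let `H` be symmetric, `‖h‖ ≤ ‖H‖`, `ε ∈ [0,1]`, and let
`v ∈ B(0,1)` with `|vᵀHv| ≥ (1 − ε)‖H‖`, `hᵀv ≥ 0` if `vᵀHv ≥ 0` and `hᵀv ≤ 0` if
`vᵀHv < 0`. If `w ∈ B((1−ε)v, ε)` and `u ∈ B(0, ε)`, then
`|f(w) − f(u)| ≥ (1 − 7ε)‖H‖`, where `f(x) = xᵀHx + hᵀx`. -/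
theorem stmt_6 (n : ℕ) (H : Matrix (Fin n) (Fin n) ℝ) (hH : H.IsSymm) (h : Fin n → ℝ)
    (ε : ℝ) (hε0 : 0 ≤ ε) (hε1 : ε ≤ 1)
    (hhH : euclidNorm h ≤ specNorm H)
    (v : Fin n → ℝ) (hv : v ∈ eball 0 1)
    (hvH : (1 - ε) * specNorm H ≤ |v ⬝ᵥ H.mulVec v|)
    (hsign1 : 0 ≤ v ⬝ᵥ H.mulVec v → 0 ≤ h ⬝ᵥ v)
    (hsign2 : v ⬝ᵥ H.mulVec v < 0 → h ⬝ᵥ v ≤ 0)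
    (w u : Fin n → ℝ)
    (hw : w ∈ eball ((1 - ε) • v) ε) (hu : u ∈ eball 0 ε) :
    |(w ⬝ᵥ H.mulVec w + h ⬝ᵥ w) - (u ⬝ᵥ H.mulVec u + h ⬝ᵥ u)| ≥
      (1 - 7 * ε) * specNorm H := by
  set M := specNorm H with hM
  have hM0 : 0 ≤ M := specNorm_nonneg H
  have hv1 : euclidNorm v ≤ 1 := by simpa [eball] using hv
  have hu1 : euclidNorm u ≤ ε := by simpa [eball] using hu
  set d := w - (1 - ε) • v with hd
  have hd1 : euclidNorm d ≤ ε := hw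
  have hw' : w = (1 - ε) • v + d := by rw [hd]; abel
  -- basic bounds
  have hbM : |h ⬝ᵥ v| ≤ M := by
    calc |h ⬝ᵥ v| ≤ euclidNorm h * euclidNorm v := dot_abs_le h v
      _ ≤ M * 1 := mul_le_mul hhH hv1 (enorm_nonneg' v) hM0
      _ = M := mul_one M
  have hdv : |d ⬝ᵥ H.mulVec v| ≤ ε * M := by
    calc |d ⬝ᵥ H.mulVec v| ≤ euclidNorm d * (M * euclidNorm v) := dot_mulVec_abs_le H d v
      _ ≤ ε * (M * 1) := mul_le_mul hd1 (mul_le_mul_of_nonneg_left hv1 hM0)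
          (mul_nonneg hM0 (enorm_nonneg' v)) hε0
      _ = ε * M := by ring
  have hdd : |d ⬝ᵥ H.mulVec d| ≤ ε * (M * ε) := by
    calc |d ⬝ᵥ H.mulVec d| ≤ euclidNorm d * (M * euclidNorm d) := dot_mulVec_abs_le H d d
      _ ≤ ε * (M * ε) := mul_le_mul hd1 (mul_le_mul_of_nonneg_left hd1 hM0)
          (mul_nonneg hM0 (enorm_nonneg' d)) hε0
  have huu : |u ⬝ᵥ H.mulVec u| ≤ ε * (M * ε) := by
    calc |u ⬝ᵥ H.mulVec u| ≤ euclidNorm u * (M * euclidNorm u) := dot_mulVec_abs_le H u u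
      _ ≤ ε * (M * ε) := mul_le_mul hu1 (mul_le_mul_of_nonneg_left hu1 hM0)
          (mul_nonneg hM0 (enorm_nonneg' u)) hε0
  have hhd : |h ⬝ᵥ d| ≤ M * ε := by
    calc |h ⬝ᵥ d| ≤ euclidNorm h * euclidNorm d := dot_abs_le h d
      _ ≤ M * ε := mul_le_mul hhH hd1 (enorm_nonneg' d) hM0
  have hhu : |h ⬝ᵥ u| ≤ M * ε := by
    calc |h ⬝ᵥ u| ≤ euclidNorm h * euclidNorm u := dot_abs_le h u
      _ ≤ M * ε := mul_le_mul hhH hu1 (enorm_nonneg' u) hM0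
  -- expansion
  have hexp : w ⬝ᵥ H.mulVec w + h ⬝ᵥ w =
      (1 - ε) ^ 2 * (v ⬝ᵥ H.mulVec v) + 2 * (1 - ε) * (d ⬝ᵥ H.mulVec v)
        + d ⬝ᵥ H.mulVec d + (1 - ε) * (h ⬝ᵥ v) + h ⬝ᵥ d := by
    rw [hw']
    simp only [Matrix.mulVec_add, Matrix.mulVec_smul, add_dotProduct, dotProduct_add,
      smul_dotProduct, dotProduct_smul, smul_eq_mul, dot_mulVec_symm hH v d]
    ring
  clear_value M d
  obtain ⟨hdv1, hdv2⟩ := abs_le.mp hdv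
  obtain ⟨hdd1, hdd2⟩ := abs_le.mp hdd
  obtain ⟨huu1, huu2⟩ := abs_le.mp huu
  obtain ⟨hhd1, hhd2⟩ := abs_le.mp hhd
  obtain ⟨hhu1, hhu2⟩ := abs_le.mp hhu
  rcases le_or_gt 0 (v ⬝ᵥ H.mulVec v) with ha | ha
  · have hb := hsign1 ha
    have haM : (1 - ε) * M ≤ v ⬝ᵥ H.mulVec v := by rwa [abs_of_nonneg ha] at hvH
    have key : (1 - 7 * ε) * M ≤
        (w ⬝ᵥ H.mulVec w + h ⬝ᵥ w) - (u ⬝ᵥ H.mulVec u + h ⬝ᵥ u) := by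
      rw [hexp]
      nlinarith [mul_le_mul_of_nonneg_left haM (sq_nonneg (1 - ε)),
        mul_nonneg hb (by linarith : (0:ℝ) ≤ 1 - ε),
        mul_nonneg (mul_nonneg hM0 (sq_nonneg ε)) (by linarith : (0:ℝ) ≤ 3 - ε)]
    exact le_trans key (le_abs_self _)
  · have hb := hsign2 ha
    have haM : (1 - ε) * M ≤ -(v ⬝ᵥ H.mulVec v) := by rwa [abs_of_neg ha] at hvH
    have key : (1 - 7 * ε) * M ≤
        -((w ⬝ᵥ H.mulVec w + h ⬝ᵥ w) - (u ⬝ᵥ H.mulVec u + h ⬝ᵥ u)) := by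
      rw [hexp]
      nlinarith [mul_le_mul_of_nonneg_left haM (sq_nonneg (1 - ε)),
        mul_nonneg (neg_nonneg.mpr hb) (by linarith : (0:ℝ) ≤ 1 - ε),
        mul_nonneg (mul_nonneg hM0 (sq_nonneg ε)) (by linarith : (0:ℝ) ≤ 3 - ε)]
    exact le_trans key (neg_le_abs _)
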